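/- Fix an integer m ≥ 1 and set x(t) = cos(2t). For integers j ∈ {1, 2, 3} and k, let t₁(k, j) = ((2m+1)j − 2k)π/(2(2m+1)) be the first time of the Type II double point C^{II}_{k,j}. Then: (a) x(t₁(k,1)) = x(t₁(k,3)) for all 1 ≤ k ≤ m; (b) x(t₁(k,2)) = x(t₁(2m+1−k, 2)) for all 1 ≤ k ≤ 2m; (c) the total number of Type II double points C^{II}_{k,j} (over the allowed ranges of (k,j)) with x(t₁(k,j)) > 0 is 2m; and (d) of these, exactly 2⌊m/2⌋ have j = 2 and exactly 2⌈m/2⌉ have j ∈ {1, 3}. -/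

import Mathlib

/-
Write `n = 2m + 1`. Then `2·t₁(k, j) = jπ - 2πk/n`, so `x(t₁(k, j)) = (-1)ʲ cos(2πk/n)`;
raising `j` by 2 shifts `t₁` by `π`, and `t₁(k, 2) + t₁(n - k, 2) = π`, which gives (a) and (b).
For `0 ≤ r ≤ 1` the sign of `cos(2πr)` is decided by comparing `r` with `1/4` and `3/4`, and
since `n` is odd `4k` is never `n` or `3n`. So `x > 0` means `4k < n` or `4k > 3n` for `j = 2`,
that is `k ≤ ⌊m/2⌋` or `k ≥ n - ⌊m/2⌋`, and `4k > n`, that is `⌊m/2⌋ < k ≤ m` (`⌈m/2⌉` values),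
for `j = 1, 3`.
-/

open Real

/-- The first time of the Type II double point `C^{II}_{k,j}` of the projection
`t ↦ (cos 2t, cos((2m+1)t + 1/2))`. -/
noncomputable def tII₁ (m k j : ℤ) : ℝ :=
  ((2 * (m : ℝ) + 1) * (j : ℝ) - 2 * (k : ℝ)) * π / (2 * (2 * (m : ℝ) + 1))

/-- The index pairs `(k, j)` of the Type II double points `C^{II}_{k,j}`:
`j ∈ {1, 3}` with `1 ≤ k ≤ m`, or `j = 2` with `1 ≤ k ≤ 2m`. -/
def typeIIIndices (m : ℤ) : Set (ℤ × ℤ) :=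
  {p | ((p.2 = 1 ∨ p.2 = 3) ∧ 1 ≤ p.1 ∧ p.1 ≤ m) ∨ (p.2 = 2 ∧ 1 ≤ p.1 ∧ p.1 ≤ 2 * m)}

namespace Real

theorem cos_two_pi_mul_pos_iff {r : ℝ} (h0 : 0 ≤ r) (h1 : r ≤ 1) :
    0 < cos (2 * π * r) ↔ r < 1 / 4 ∨ 3 / 4 < r := by
  have hπ := pi_pos
  constructor
  · intro hpos
    by_contra! h
    exact hpos.not_ge (cos_nonpos_of_pi_div_two_le_of_le (by nlinarith) (by nlinarith))
  · rintro (h | h)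
    · exact cos_pos_of_mem_Ioo ⟨by nlinarith, by nlinarith⟩
    · rw [← cos_sub_two_pi]
      exact cos_pos_of_mem_Ioo ⟨by nlinarith, by nlinarith⟩

theorem cos_two_pi_mul_neg_iff {r : ℝ} (h0 : 0 ≤ r) (h1 : r ≤ 1) :
    cos (2 * π * r) < 0 ↔ 1 / 4 < r ∧ r < 3 / 4 := by
  have hπ := pi_pos
  constructor
  · intro hneg
    by_contra! h
    refine hneg.not_ge ?_
    by_cases hr : r ≤ 1 / 4
    · exact cos_nonneg_of_mem_Icc ⟨by nlinarith, by nlinarith⟩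
    · rw [← cos_sub_two_pi]
      exact cos_nonneg_of_mem_Icc ⟨by nlinarith [h (by linarith)], by nlinarith⟩
  · rintro ⟨h, h'⟩
    exact cos_neg_of_pi_div_two_lt_of_lt (by nlinarith) (by nlinarith)

end Real

theorem two_mul_intCast_add_one_ne_zero (m : ℤ) : (2 * (m : ℝ) + 1) ≠ 0 := by
  exact_mod_cast (by omega : 2 * m + 1 ≠ 0)

theorem two_mul_tII₁ (m k j : ℤ) : 2 * tII₁ m k j = j * π - 2 * π * (k / (2 * m + 1)) := by
  have := two_mul_intCast_add_one_ne_zero m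
  unfold tII₁
  field_simp

theorem tII₁_add_two (m k j : ℤ) : tII₁ m k (j + 2) = tII₁ m k j + π := by
  have := two_mul_intCast_add_one_ne_zero m
  unfold tII₁
  push_cast
  field_simp
  ring

theorem tII₁_two_add_tII₁_two_reflect (m k : ℤ) : tII₁ m k 2 + tII₁ m (2 * m + 1 - k) 2 = π := by
  have := two_mul_intCast_add_one_ne_zero m
  unfold tII₁
  push_cast
  field_simp
  ring

theorem cos_two_mul_tII₁_two_reflect (m k : ℤ) :
    cos (2 * tII₁ m k 2) = cos (2 * tII₁ m (2 * m + 1 - k) 2) := by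
  rw [eq_sub_of_add_eq' (tII₁_two_add_tII₁_two_reflect m k), mul_sub, cos_two_pi_sub]

theorem cos_two_mul_tII₁_add_two (m k j : ℤ) :
    cos (2 * tII₁ m k (j + 2)) = cos (2 * tII₁ m k j) := by
  rw [tII₁_add_two, mul_add, cos_add_two_pi]

theorem cos_two_mul_tII₁_two_pos_iff {m k : ℤ} (hk₀ : 0 ≤ k) (hk : k ≤ 2 * m + 1) :
    0 < cos (2 * tII₁ m k 2) ↔ 4 * k < 2 * m + 1 ∨ 3 * (2 * m + 1) < 4 * k := by
  have hn : (0 : ℝ) < 2 * m + 1 := by exact_mod_cast (by omega : 0 < 2 * m + 1)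
  have hr₀ : (0 : ℝ) ≤ k / (2 * m + 1) := by positivity
  have hr₁ : (k : ℝ) / (2 * m + 1) ≤ 1 := (div_le_one hn).2 (by exact_mod_cast hk)
  rw [two_mul_tII₁, Int.cast_two, cos_two_pi_sub, cos_two_pi_mul_pos_iff hr₀ hr₁,
    div_lt_iff₀ hn, lt_div_iff₀ hn]
  rify
  exact or_congr (by constructor <;> intro h <;> linarith) (by constructor <;> intro h <;> linarith)

theorem cos_two_mul_tII₁_one_pos_iff {m k : ℤ} (hk₀ : 0 ≤ k) (hk : k ≤ m) :
    0 < cos (2 * tII₁ m k 1) ↔ 2 * m + 1 < 4 * k := by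
  have hn : (0 : ℝ) < 2 * m + 1 := by exact_mod_cast (by omega : 0 < 2 * m + 1)
  have hk' : (k : ℝ) ≤ m := by exact_mod_cast hk
  have hr₀ : (0 : ℝ) ≤ k / (2 * m + 1) := by positivity
  have hr₁ : (k : ℝ) / (2 * m + 1) ≤ 1 := (div_le_one hn).2 (by linarith)
  rw [two_mul_tII₁, Int.cast_one, one_mul, cos_pi_sub, neg_pos, cos_two_pi_mul_neg_iff hr₀ hr₁,
    div_lt_iff₀ hn, lt_div_iff₀ hn]
  rify
  constructor
  · rintro ⟨h, -⟩
    linarith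
  · intro h
    constructor <;> linarith

theorem mem_typeIIIndices_and_cos_pos_iff {m : ℤ} {p : ℤ × ℤ} :
    p ∈ typeIIIndices m ∧ 0 < cos (2 * tII₁ m p.1 p.2) ↔
      (p.2 = 2 ∧ 1 ≤ p.1 ∧ p.1 ≤ 2 * m ∧ (4 * p.1 < 2 * m + 1 ∨ 3 * (2 * m + 1) < 4 * p.1)) ∨
      ((p.2 = 1 ∨ p.2 = 3) ∧ 2 * m + 1 < 4 * p.1 ∧ p.1 ≤ m) := by
  obtain ⟨k, j⟩ := p
  simp only [typeIIIndices, Set.mem_ofPred_eq]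
  by_cases hj : j = 1 ∨ j = 2 ∨ j = 3
  swap
  · omega
  obtain rfl | rfl | rfl := hj
  · rw [and_congr_right fun _ => cos_two_mul_tII₁_one_pos_iff (by omega) (by omega)]
    omega
  · rw [and_congr_right fun _ => cos_two_mul_tII₁_two_pos_iff (by omega) (by omega)]
    omega
  · rw [show cos (2 * tII₁ m k 3) = cos (2 * tII₁ m k 1) from cos_two_mul_tII₁_add_two m k 1,
      and_congr_right fun _ => cos_two_mul_tII₁_one_pos_iff (by omega) (by omega)]
    omega

theorem finite_typeIIIndices (m : ℤ) : (typeIIIndices m).Finite := by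
  refine ((Set.finite_Icc 1 (2 * m)).prod (Set.finite_Icc 1 3)).subset ?_
  rintro ⟨k, j⟩ h
  simp only [typeIIIndices, Set.mem_ofPred_eq, Set.mem_prod, Set.mem_Icc] at h ⊢
  omega

theorem setOf_cos_pos_two_eq (m : ℤ) :
    {p ∈ typeIIIndices m | 0 < cos (2 * tII₁ m p.1 p.2) ∧ p.2 = 2} =
      ↑((Finset.Icc 1 (m / 2) ∪ Finset.Icc (2 * m + 1 - m / 2) (2 * m)) ×ˢ ({2} : Finset ℤ)) := by
  ext p
  simp only [Set.mem_ofPred_eq, ← and_assoc, mem_typeIIIndices_and_cos_pos_iff, Finset.coe_product,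
    Set.mem_prod, Finset.mem_coe, Finset.mem_union, Finset.mem_Icc, Finset.mem_singleton]
  omega

theorem setOf_cos_pos_odd_eq (m : ℤ) :
    {p ∈ typeIIIndices m | 0 < cos (2 * tII₁ m p.1 p.2) ∧ (p.2 = 1 ∨ p.2 = 3)} =
      ↑(Finset.Icc (m / 2 + 1) m ×ˢ ({1, 3} : Finset ℤ)) := by
  ext p
  simp only [Set.mem_ofPred_eq, ← and_assoc, mem_typeIIIndices_and_cos_pos_iff, Finset.coe_product,
    Set.mem_prod, Finset.mem_coe, Finset.mem_Icc, Finset.mem_insert, Finset.mem_singleton]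
  omega

theorem setOf_cos_pos_eq (m : ℤ) :
    {p ∈ typeIIIndices m | 0 < cos (2 * tII₁ m p.1 p.2)} =
      {p ∈ typeIIIndices m | 0 < cos (2 * tII₁ m p.1 p.2) ∧ p.2 = 2} ∪
        {p ∈ typeIIIndices m | 0 < cos (2 * tII₁ m p.1 p.2) ∧ (p.2 = 1 ∨ p.2 = 3)} := by
  ext p
  simp only [Set.mem_union, Set.mem_ofPred_eq, ← and_assoc, mem_typeIIIndices_and_cos_pos_iff]
  omega

theorem ncard_setOf_cos_pos_two (m : ℤ) (hm : 0 ≤ m) :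
    ({p ∈ typeIIIndices m | 0 < cos (2 * tII₁ m p.1 p.2) ∧ p.2 = 2}.ncard : ℤ) = 2 * (m / 2) := by
  have hdisj : Disjoint (Finset.Icc 1 (m / 2)) (Finset.Icc (2 * m + 1 - m / 2) (2 * m)) := by
    rw [Finset.disjoint_left]
    intro k hk hk'
    simp only [Finset.mem_Icc] at hk hk'
    omega
  rw [setOf_cos_pos_two_eq, Set.ncard_coe_finset, Finset.card_product,
    Finset.card_union_of_disjoint hdisj, Int.card_Icc, Int.card_Icc, Finset.card_singleton]
  omega

theorem ncard_setOf_cos_pos_odd (m : ℤ) (hm : 0 ≤ m) :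
    ({p ∈ typeIIIndices m | 0 < cos (2 * tII₁ m p.1 p.2) ∧ (p.2 = 1 ∨ p.2 = 3)}.ncard : ℤ) =
      2 * (m - m / 2) := by
  rw [setOf_cos_pos_odd_eq, Set.ncard_coe_finset, Finset.card_product, Int.card_Icc,
    Finset.card_pair (by norm_num)]
  omega

/-- The `x`-coordinates of the Type II double points of the projection
`t ↦ (cos 2t, cos((2m+1)t + 1/2))` satisfy `x(C^{II}_{k,1}) = x(C^{II}_{k,3})` and
`x(C^{II}_{k,2}) = x(C^{II}_{2m+1−k,2})`; exactly `2m` Type II double points have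
positive `x`-coordinate, of which `2⌊m/2⌋` have `j = 2` and `2⌈m/2⌉` have `j ∈ {1,3}`. -/
theorem typeII_double_points_x_values (m : ℤ) (hm : 1 ≤ m) :
    (∀ k : ℤ, 1 ≤ k → k ≤ m →
      Real.cos (2 * tII₁ m k 1) = Real.cos (2 * tII₁ m k 3)) ∧
    (∀ k : ℤ, 1 ≤ k → k ≤ 2 * m →
      Real.cos (2 * tII₁ m k 2) = Real.cos (2 * tII₁ m (2 * m + 1 - k) 2)) ∧
    ({p ∈ typeIIIndices m | 0 < Real.cos (2 * tII₁ m p.1 p.2)}.Finite ∧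
      ({p ∈ typeIIIndices m | 0 < Real.cos (2 * tII₁ m p.1 p.2)}.ncard : ℤ) = 2 * m) ∧
    (({p ∈ typeIIIndices m | 0 < Real.cos (2 * tII₁ m p.1 p.2) ∧ p.2 = 2}.ncard : ℤ) =
        2 * ⌊(m : ℚ) / 2⌋ ∧
      ({p ∈ typeIIIndices m |
          0 < Real.cos (2 * tII₁ m p.1 p.2) ∧ (p.2 = 1 ∨ p.2 = 3)}.ncard : ℤ) =
        2 * ⌈(m : ℚ) / 2⌉) := by
  have hfloor : ⌊(m : ℚ) / 2⌋ = m / 2 := by simpa using Rat.floor_intCast_div_natCast m 2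
  have hceil : ⌈(m : ℚ) / 2⌉ = m - m / 2 := by
    have := Rat.ceil_intCast_div_natCast m 2
    rw [Nat.cast_ofNat] at this
    omega
  have hdisj : Disjoint {p ∈ typeIIIndices m | 0 < cos (2 * tII₁ m p.1 p.2) ∧ p.2 = 2}
      {p ∈ typeIIIndices m | 0 < cos (2 * tII₁ m p.1 p.2) ∧ (p.2 = 1 ∨ p.2 = 3)} := by
    rw [Set.disjoint_left]
    rintro p ⟨-, -, h⟩ ⟨-, -, h'⟩
    omega
  have hfin := finite_typeIIIndices m
  refine ⟨fun k _ _ => (cos_two_mul_tII₁_add_two m k 1).symm,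
    fun k _ _ => cos_two_mul_tII₁_two_reflect m k, ⟨hfin.sep _, ?_⟩, ?_, ?_⟩
  · rw [setOf_cos_pos_eq, Set.ncard_union_eq hdisj (hfin.sep _) (hfin.sep _), Nat.cast_add,
      ncard_setOf_cos_pos_two m (by omega), ncard_setOf_cos_pos_odd m (by omega)]
    ring
  · rw [ncard_setOf_cos_pos_two m (by omega), hfloor]
  · rw [ncard_setOf_cos_pos_odd m (by omega), hceil]
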